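/- arXiv:math/0407043 — 3 statements merged into one kernel-verified Lean document; each statement's English description precedes it below -/
import Mathlib

section
/- In the Klein model, let P₁ = {x : ⟪x,n₁⟫ = d₁} and P₂ = {x : ⟪x,n₂⟫ = d₂} be planes meeting the open unit ball (‖nᵢ‖=1, |dᵢ|<1). Then the dihedral angle between the hyperbolic planes P₁∩B³ and P₂∩B³ along their common geodesic (when they intersect inside B³) equals the intersection angle of the boundary circles P₁∩S² and P₂∩S²; in particular cos θ = (d₁d₂ − ⟪n₁,n₂⟫)/(√(1−d₁²)√(1−d₂²)). -/
/-!
At a point `x` of the ball put `S = 1 - ‖x‖²`. Up to the factor `S⁻²` the Klein metric is the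
form `Q(ξ, η) = S⟪ξ, η⟫ + ⟪ξ, x⟫⟪η, x⟫`, whose adjugate is `P(u, w) = ⟪u, w⟫ - ⟪x, u⟫⟪x, w⟫`:
`Q(a × b, c × d) = P(a, c) P(b, d) - P(a, d) P(b, c)`. For normals of planes through `x`,
`P(nᵢ, nⱼ) = ⟪nᵢ, nⱼ⟫ - dᵢ dⱼ` is exactly the Gram matrix defining the angle of the boundary
circles.

Let `t = n₁ × n₂` span the common geodesic and `v = S t + ⟪t, x⟫ x`, so that `Q(ξ, t) = ⟪ξ, v⟫`
and `P(nᵢ, v) = S ⟪nᵢ, t⟫ = 0`. Then `ξ₁ = n₁ × v` and `ξ₂ = v × n₂` lie in the planes, are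
Klein-orthogonal to `t`, and the minor identity gives `Q(ξᵢ, ξⱼ) = ± P(nᵢ, nⱼ) P(v, v)`, so the
Klein cosine of `ξ₁, ξ₂` is `-P(n₁, n₂) / √(P(n₁, n₁) P(n₂, n₂))`.
-/

open RealInnerProductSpace

/-- The Beltrami–Klein metric tensor at a point `x` of the open unit ball. -/
noncomputable def kleinMetric (x ξ η : EuclideanSpace ℝ (Fin 3)) : ℝ :=
  ⟪ξ, η⟫ / (1 - ‖x‖ ^ 2) + ⟪ξ, x⟫ * ⟪η, x⟫ / (1 - ‖x‖ ^ 2) ^ 2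

lemma mul_div_sqrt_mul_mul_sqrt_mul {c : ℝ} (hc : 0 < c) (a b e : ℝ) :
    a * c / (√(b * c) * √(e * c)) = a / (√b * √e) := by
  rw [Real.sqrt_mul' b hc.le, Real.sqrt_mul' e hc.le, mul_mul_mul_comm, Real.mul_self_sqrt hc.le,
    mul_div_mul_right _ _ hc.ne']

namespace KleinModel

open Matrix WithLp

noncomputable def cross (a b : EuclideanSpace ℝ (Fin 3)) : EuclideanSpace ℝ (Fin 3) :=
  toLp 2 (ofLp a ⨯₃ ofLp b)

lemma inner_cross_left (a b : EuclideanSpace ℝ (Fin 3)) : ⟪cross a b, a⟫ = 0 :=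
  dot_self_cross (ofLp a) (ofLp b)

lemma inner_cross_right (a b : EuclideanSpace ℝ (Fin 3)) : ⟪cross a b, b⟫ = 0 :=
  dot_cross_self (ofLp a) (ofLp b)

lemma cross_ne_zero_of_setOf_inner_ne {n₁ n₂ x : EuclideanSpace ℝ (Fin 3)} {d₁ d₂ : ℝ}
    (hn₁ : n₁ ≠ 0) (hn₂ : n₂ ≠ 0) (hx₁ : ⟪x, n₁⟫ = d₁) (hx₂ : ⟪x, n₂⟫ = d₂)
    (hne : {y : EuclideanSpace ℝ (Fin 3) | ⟪y, n₁⟫ = d₁} ≠ {y | ⟪y, n₂⟫ = d₂}) :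
    cross n₁ n₂ ≠ 0 := by
  intro h
  have hdep : ¬LinearIndependent ℝ ![ofLp n₁, ofLp n₂] := by
    rw [← crossProduct_ne_zero_iff_linearIndependent, not_not]
    simpa [cross] using h
  obtain ⟨a, rfl⟩ : ∃ a : ℝ, a • n₁ = n₂ := by
    rw [LinearIndependent.pair_iff' (by simpa using hn₁), not_forall_not] at hdep
    obtain ⟨a, ha⟩ := hdep
    exact ⟨a, by simpa using congrArg (toLp 2) ha⟩
  have ha : a ≠ 0 := by rintro rfl; simp at hn₂
  apply hne
  ext y
  simp only [Set.mem_ofPred_eq, inner_smul_right, ← hx₂, ← hx₁, mul_right_inj' ha]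

lemma inner_eq_sum_three (a b : EuclideanSpace ℝ (Fin 3)) :
    ⟪a, b⟫ = a 0 * b 0 + a 1 * b 1 + a 2 * b 2 := by
  simp [PiLp.inner_apply, Fin.sum_univ_three, mul_comm]

variable (x : EuclideanSpace ℝ (Fin 3))

noncomputable def kleinForm (ξ η : EuclideanSpace ℝ (Fin 3)) : ℝ :=
  (1 - ‖x‖ ^ 2) * ⟪ξ, η⟫ + ⟪ξ, x⟫ * ⟪η, x⟫

noncomputable def dualForm (u w : EuclideanSpace ℝ (Fin 3)) : ℝ :=
  ⟪u, w⟫ - ⟪x, u⟫ * ⟪x, w⟫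

noncomputable def kleinDual (t : EuclideanSpace ℝ (Fin 3)) : EuclideanSpace ℝ (Fin 3) :=
  (1 - ‖x‖ ^ 2) • t + ⟪t, x⟫ • x

lemma kleinForm_cross_cross (a b c d : EuclideanSpace ℝ (Fin 3)) :
    kleinForm x (cross a b) (cross c d) =
      dualForm x a c * dualForm x b d - dualForm x a d * dualForm x b c := by
  simp only [kleinForm, dualForm, ← real_inner_self_eq_norm_sq, inner_eq_sum_three, cross,
    cross_apply, Fin.isValue, cons_val_zero, cons_val_one, cons_val]
  ring

lemma kleinForm_eq_inner_kleinDual (ξ t : EuclideanSpace ℝ (Fin 3)) :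
    kleinForm x ξ t = ⟪ξ, kleinDual x t⟫ := by
  rw [kleinForm, kleinDual, inner_add_right, inner_smul_right, inner_smul_right]
  ring

lemma dualForm_kleinDual (u t : EuclideanSpace ℝ (Fin 3)) :
    dualForm x u (kleinDual x t) = (1 - ‖x‖ ^ 2) * ⟪u, t⟫ := by
  simp only [dualForm, kleinDual, inner_add_right, inner_smul_right, real_inner_self_eq_norm_sq,
    real_inner_comm x t, real_inner_comm x u]
  ring

lemma dualForm_comm (u w : EuclideanSpace ℝ (Fin 3)) : dualForm x u w = dualForm x w u := by
  rw [dualForm, dualForm, real_inner_comm u w, mul_comm]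

variable {x}

lemma ne_zero_of_kleinForm_self_ne_zero {ξ : EuclideanSpace ℝ (Fin 3)} (h : kleinForm x ξ ξ ≠ 0) :
    ξ ≠ 0 := by
  rintro rfl
  simp [kleinForm] at h

lemma kleinMetric_eq_kleinForm_mul_inv (hx : ‖x‖ ≠ 1) (ξ η : EuclideanSpace ℝ (Fin 3)) :
    kleinMetric x ξ η = kleinForm x ξ η * ((1 - ‖x‖ ^ 2) ^ 2)⁻¹ := by
  have : 1 - ‖x‖ ^ 2 ≠ 0 := by
    rw [sub_ne_zero, ne_comm]
    exact (pow_eq_one_iff_of_nonneg (norm_nonneg x) two_ne_zero).not.mpr hx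
  rw [kleinMetric, kleinForm]
  field_simp

lemma one_sub_norm_sq_pos (hx : ‖x‖ < 1) : 0 < 1 - ‖x‖ ^ 2 := by
  nlinarith [norm_nonneg x]

lemma kleinForm_self_pos (hx : ‖x‖ < 1) {t : EuclideanSpace ℝ (Fin 3)} (ht : t ≠ 0) :
    0 < kleinForm x t t := by
  have := one_sub_norm_sq_pos hx
  rw [kleinForm, real_inner_self_eq_norm_sq]
  exact add_pos_of_pos_of_nonneg (by positivity) (mul_self_nonneg _)

lemma dualForm_self_pos (hx : ‖x‖ < 1) {u : EuclideanSpace ℝ (Fin 3)} (hu : u ≠ 0) :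
    0 < dualForm x u u := by
  have hcs : ⟪x, u⟫ ^ 2 ≤ (‖u‖ * ‖x‖) ^ 2 := by
    rw [← sq_abs, mul_comm]
    exact pow_le_pow_left₀ (abs_nonneg _) (abs_real_inner_le_norm x u) 2
  have hlt : (‖u‖ * ‖x‖) ^ 2 < ‖u‖ ^ 2 := by
    rw [mul_pow]
    exact mul_lt_of_lt_one_right (by positivity) (by linarith [one_sub_norm_sq_pos hx])
  rw [dualForm, real_inner_self_eq_norm_sq, ← sq]
  linarith

lemma dualForm_kleinDual_self_pos (hx : ‖x‖ < 1) {t : EuclideanSpace ℝ (Fin 3)} (ht : t ≠ 0) :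
    0 < dualForm x (kleinDual x t) (kleinDual x t) := by
  rw [dualForm_kleinDual, real_inner_comm, ← kleinForm_eq_inner_kleinDual]
  exact mul_pos (one_sub_norm_sq_pos hx) (kleinForm_self_pos hx ht)

lemma kleinMetric_eq_zero_of_inner_kleinDual (hx : ‖x‖ ≠ 1) {ξ t : EuclideanSpace ℝ (Fin 3)}
    (h : ⟪ξ, kleinDual x t⟫ = 0) : kleinMetric x ξ t = 0 := by
  rw [kleinMetric_eq_kleinForm_mul_inv hx, kleinForm_eq_inner_kleinDual, h, zero_mul]

end KleinModel

open KleinModel in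
theorem dihedral_angle_eq_circle_angle_general
    (n₁ n₂ : EuclideanSpace ℝ (Fin 3)) (d₁ d₂ : ℝ)
    (hn₁ : ‖n₁‖ = 1) (hn₂ : ‖n₂‖ = 1)
    (hne : {x : EuclideanSpace ℝ (Fin 3) | ⟪x, n₁⟫ = d₁} ≠
           {x : EuclideanSpace ℝ (Fin 3) | ⟪x, n₂⟫ = d₂})
    (x : EuclideanSpace ℝ (Fin 3)) (hx : ‖x‖ < 1)
    (hx₁ : ⟪x, n₁⟫ = d₁) (hx₂ : ⟪x, n₂⟫ = d₂) :
    ∃ t ξ₁ ξ₂ : EuclideanSpace ℝ (Fin 3),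
      t ≠ 0 ∧ ⟪t, n₁⟫ = 0 ∧ ⟪t, n₂⟫ = 0 ∧
      ξ₁ ≠ 0 ∧ ⟪ξ₁, n₁⟫ = 0 ∧ kleinMetric x ξ₁ t = 0 ∧
      ξ₂ ≠ 0 ∧ ⟪ξ₂, n₂⟫ = 0 ∧ kleinMetric x ξ₂ t = 0 ∧
      kleinMetric x ξ₁ ξ₂ /
          (Real.sqrt (kleinMetric x ξ₁ ξ₁) * Real.sqrt (kleinMetric x ξ₂ ξ₂)) =
        (d₁ * d₂ - ⟪n₁, n₂⟫) / (Real.sqrt (1 - d₁ ^ 2) * Real.sqrt (1 - d₂ ^ 2)) := by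
  have hn₁₀ : n₁ ≠ 0 := norm_ne_zero_iff.mp (by simp [hn₁])
  have hn₂₀ : n₂ ≠ 0 := norm_ne_zero_iff.mp (by simp [hn₂])
  set t := cross n₁ n₂
  have ht : t ≠ 0 := cross_ne_zero_of_setOf_inner_ne hn₁₀ hn₂₀ hx₁ hx₂ hne
  set v := kleinDual x t
  have hv₁ : dualForm x n₁ v = 0 := by
    rw [dualForm_kleinDual, real_inner_comm, inner_cross_left, mul_zero]
  have hv₂ : dualForm x n₂ v = 0 := by
    rw [dualForm_kleinDual, real_inner_comm, inner_cross_right, mul_zero]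
  have hvv : 0 < dualForm x v v := dualForm_kleinDual_self_pos hx ht
  have h₁₁ : kleinForm x (cross n₁ v) (cross n₁ v) = dualForm x n₁ n₁ * dualForm x v v := by
    rw [kleinForm_cross_cross, hv₁]; ring
  have h₂₂ : kleinForm x (cross v n₂) (cross v n₂) = dualForm x n₂ n₂ * dualForm x v v := by
    rw [kleinForm_cross_cross, dualForm_comm x v n₂, hv₂]; ring
  have h₁₂ : kleinForm x (cross n₁ v) (cross v n₂) = -dualForm x n₁ n₂ * dualForm x v v := by
    rw [kleinForm_cross_cross, dualForm_comm x v n₂, hv₁, hv₂]; ring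
  have hξ₁ : cross n₁ v ≠ 0 := ne_zero_of_kleinForm_self_ne_zero <| by
    rw [h₁₁]; exact (mul_pos (dualForm_self_pos hx hn₁₀) hvv).ne'
  have hξ₂ : cross v n₂ ≠ 0 := ne_zero_of_kleinForm_self_ne_zero <| by
    rw [h₂₂]; exact (mul_pos (dualForm_self_pos hx hn₂₀) hvv).ne'
  refine ⟨t, cross n₁ v, cross v n₂, ht, inner_cross_left _ _, inner_cross_right _ _,
    hξ₁, inner_cross_left _ _, kleinMetric_eq_zero_of_inner_kleinDual hx.ne (inner_cross_right _ _),
    hξ₂, inner_cross_right _ _, kleinMetric_eq_zero_of_inner_kleinDual hx.ne (inner_cross_left _ _),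
    ?_⟩
  have hS : 0 < ((1 - ‖x‖ ^ 2) ^ 2)⁻¹ := by have := one_sub_norm_sq_pos hx; positivity
  simp only [kleinMetric_eq_kleinForm_mul_inv hx.ne, h₁₁, h₂₂, h₁₂, mul_assoc,
    mul_div_sqrt_mul_mul_sqrt_mul (mul_pos hvv hS)]
  rw [dualForm, dualForm, dualForm, hx₁, hx₂, real_inner_self_eq_norm_sq,
    real_inner_self_eq_norm_sq, hn₁, hn₂, one_pow, ← sq, ← sq, neg_sub]

/-- In the Klein model, let `P₁ = {⟪x,n₁⟫ = d₁}` and `P₂ = {⟪x,n₂⟫ = d₂}`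
(`‖nᵢ‖ = 1`, `|dᵢ| < 1`, `P₁ ≠ P₂`) be planes meeting inside the open unit ball.
At any point `x` of their common geodesic, one can choose a nonzero direction `t`
of the common geodesic (tangent to both planes) and nonzero directions `ξᵢ`
tangent to `Pᵢ` and Klein-orthogonal to `t` at `x`, such that the cosine of the
(exterior) dihedral angle between the two hyperbolic planes, computed with the
Klein metric, equals the intersection angle of the boundary circles `Pᵢ ∩ S²`:
`cos θ = (d₁d₂ - ⟪n₁,n₂⟫)/(√(1-d₁²)√(1-d₂²))`. -/
theorem dihedral_angle_eq_circle_angle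
    (n₁ n₂ : EuclideanSpace ℝ (Fin 3)) (d₁ d₂ : ℝ)
    (hn₁ : ‖n₁‖ = 1) (hn₂ : ‖n₂‖ = 1) (hd₁ : |d₁| < 1) (hd₂ : |d₂| < 1)
    (hne : {x : EuclideanSpace ℝ (Fin 3) | ⟪x, n₁⟫ = d₁} ≠
           {x : EuclideanSpace ℝ (Fin 3) | ⟪x, n₂⟫ = d₂})
    (x : EuclideanSpace ℝ (Fin 3)) (hx : ‖x‖ < 1)
    (hx₁ : ⟪x, n₁⟫ = d₁) (hx₂ : ⟪x, n₂⟫ = d₂) :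
    ∃ t ξ₁ ξ₂ : EuclideanSpace ℝ (Fin 3),
      t ≠ 0 ∧ ⟪t, n₁⟫ = 0 ∧ ⟪t, n₂⟫ = 0 ∧
      ξ₁ ≠ 0 ∧ ⟪ξ₁, n₁⟫ = 0 ∧ kleinMetric x ξ₁ t = 0 ∧
      ξ₂ ≠ 0 ∧ ⟪ξ₂, n₂⟫ = 0 ∧ kleinMetric x ξ₂ t = 0 ∧
      kleinMetric x ξ₁ ξ₂ /
          (Real.sqrt (kleinMetric x ξ₁ ξ₁) * Real.sqrt (kleinMetric x ξ₂ ξ₂)) =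
        (d₁ * d₂ - ⟪n₁, n₂⟫) / (Real.sqrt (1 - d₁ ^ 2) * Real.sqrt (1 - d₂ ^ 2)) :=
  dihedral_angle_eq_circle_angle_general n₁ n₂ d₁ d₂ hn₁ hn₂ hne x hx hx₁ hx₂
end

section
/- Let C'₁,…,C'_M be circles on S² bounding pairwise disjoint closed spherical caps each strictly smaller than a hemisphere, i.e. C'_j = S² ∩ {⟪x, u_j⟫ = a_j} with ‖u_j‖ = 1 and 0 < a_j < 1 and caps {⟪x,u_j⟫ ≥ a_j} pairwise disjoint. Then the dual points v_j = u_j/a_j are pairwise distinct, all lie outside the closed unit ball, and no v_j lies in the closed convex hull of the others together with the closed unit ball; in particular, each v_j is a vertex of the convex hull of {v₁,…,v_M}. -/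
open RealInnerProductSpace

/-- Let `C'_j = S² ∩ {⟪x,u_j⟫ = a_j}` (`‖u_j‖ = 1`, `0 < a_j < 1`) be circles on
`S²` bounding pairwise disjoint closed caps `{x ∈ S² : ⟪x,u_j⟫ ≥ a_j}`, each
strictly smaller than a hemisphere.  Then the dual points `v_j = u_j/a_j` are
pairwise distinct, all lie outside the closed unit ball, and no `v_j` lies in the
closed convex hull of the other dual points together with the closed unit ball;
in particular each `v_j` is a vertex of the convex hull of `{v₁,…,v_M}`. -/
theorem dual_points_of_disjoint_caps
    (M : ℕ) (u : Fin M → EuclideanSpace ℝ (Fin 3)) (a : Fin M → ℝ)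
    (hu : ∀ j, ‖u j‖ = 1) (ha : ∀ j, a j ∈ Set.Ioo (0 : ℝ) 1)
    (hdisj : ∀ i j, i ≠ j →
      {x : EuclideanSpace ℝ (Fin 3) | ‖x‖ = 1 ∧ a i ≤ ⟪x, u i⟫} ∩
        {x : EuclideanSpace ℝ (Fin 3) | ‖x‖ = 1 ∧ a j ≤ ⟪x, u j⟫} = ∅) :
    Function.Injective (fun j => (a j)⁻¹ • u j) ∧
    (∀ j, 1 < ‖(a j)⁻¹ • u j‖) ∧
    (∀ j, (a j)⁻¹ • u j ∉
        convexHull ℝ (((fun i => (a i)⁻¹ • u i) '' {i | i ≠ j}) ∪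
          Metric.closedBall (0 : EuclideanSpace ℝ (Fin 3)) 1)) ∧
    (∀ j, (a j)⁻¹ • u j ∉
        convexHull ℝ ((fun i => (a i)⁻¹ • u i) '' {i | i ≠ j})) := by
  have ha0 : ∀ j, 0 < a j := fun j => (ha j).1
  have ha1 : ∀ j, a j < 1 := fun j => (ha j).2
  -- key geometric fact: the center of one cap is not in another cap
  have key : ∀ i j, i ≠ j → ⟪u i, u j⟫ < a j := by
    intro i j hij
    by_contra h
    push_neg at h
    have hmem : u i ∈ ({x : EuclideanSpace ℝ (Fin 3) | ‖x‖ = 1 ∧ a i ≤ ⟪x, u i⟫} ∩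
        {x : EuclideanSpace ℝ (Fin 3) | ‖x‖ = 1 ∧ a j ≤ ⟪x, u j⟫}) := by
      refine ⟨⟨hu i, ?_⟩, ⟨hu i, h⟩⟩
      rw [real_inner_self_eq_norm_sq, hu i]
      nlinarith [ha1 i]
    rw [hdisj i j hij] at hmem
    exact hmem
  have hvj : ∀ j, ⟪(a j)⁻¹ • u j, u j⟫ = (a j)⁻¹ := by
    intro j
    rw [real_inner_smul_left, real_inner_self_eq_norm_sq, hu j]
    ring
  have hinv : ∀ j, 1 < (a j)⁻¹ := fun j => by rw [lt_inv_comm₀ one_pos (ha0 j)]; simpa using ha1 j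
  have hvi : ∀ i j, i ≠ j → ⟪(a i)⁻¹ • u i, u j⟫ < 1 := by
    intro i j hij
    rw [real_inner_smul_left]
    have h1 := key j i hij.symm
    rw [real_inner_comm] at h1
    have h2 := ha0 i
    have h3 : (0:ℝ) < (a i)⁻¹ := inv_pos.2 h2
    calc (a i)⁻¹ * ⟪u i, u j⟫ < (a i)⁻¹ * a i := by
          exact mul_lt_mul_of_pos_left h1 h3
      _ = 1 := inv_mul_cancel₀ (ne_of_gt h2)
  -- the separating halfspace
  have hconv : ∀ j, Convex ℝ {x : EuclideanSpace ℝ (Fin 3) | ⟪x, u j⟫ ≤ 1} := by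
    intro j
    exact convex_halfSpace_le
      ⟨fun x y => inner_add_left x y (u j), fun c x => real_inner_smul_left x (u j) c⟩ 1
  have hsub : ∀ j, (((fun i => (a i)⁻¹ • u i) '' {i | i ≠ j}) ∪
      Metric.closedBall (0 : EuclideanSpace ℝ (Fin 3)) 1) ⊆
      {x : EuclideanSpace ℝ (Fin 3) | ⟪x, u j⟫ ≤ 1} := by
    intro j x hx
    rcases hx with hx | hx
    · rcases hx with ⟨i, hi, rfl⟩
      exact le_of_lt (hvi i j hi)
    · have hb : ‖x‖ ≤ 1 := by simpa using hx
      calc ⟪x, u j⟫ ≤ ‖x‖ * ‖u j‖ := real_inner_le_norm x (u j)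
        _ ≤ 1 := by rw [hu j]; simpa using hb
  have hmain : ∀ j, (a j)⁻¹ • u j ∉
      convexHull ℝ (((fun i => (a i)⁻¹ • u i) '' {i | i ≠ j}) ∪
        Metric.closedBall (0 : EuclideanSpace ℝ (Fin 3)) 1) := by
    intro j hmem
    have := convexHull_min (hsub j) (hconv j) hmem
    have h1 : ⟪(a j)⁻¹ • u j, u j⟫ ≤ 1 := this
    rw [hvj j] at h1
    exact absurd h1 (not_le.2 (hinv j))
  refine ⟨?_, ?_, hmain, ?_⟩
  · intro i j h
    by_contra hij
    simp only at h
    have h1 : ⟪(a i)⁻¹ • u i, u j⟫ < 1 := hvi i j hij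
    rw [h, hvj j] at h1
    exact absurd h1 (not_lt.2 (le_of_lt (hinv j)))
  · intro j
    rw [norm_smul, hu j]
    rw [Real.norm_eq_abs, abs_of_pos (inv_pos.2 (ha0 j))]; simpa using hinv j
  · intro j hmem
    exact hmain j (convexHull_mono Set.subset_union_left hmem)
end

section
/- Let v₁, v₂ ∈ ℝ³ with ‖v₁‖, ‖v₂‖ > 1. The spherical caps cut out by their polar dual planes, namely {x ∈ S² : ⟪x, v₁⟫ ≥ 1} and {x ∈ S² : ⟪x, v₂⟫ ≥ 1}, are disjoint if and only if the chord of the unit sphere determined by the segment from v₁ to v₂ passes through the open unit ball, i.e. dist(0, line(v₁,v₂)) < 1 and the segment [v₁,v₂] meets the open unit ball. -/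
open RealInnerProductSpace

private lemma cap_point (v₁ v₂ w : EuclideanSpace ℝ (Fin 3)) (hw : 1 ≤ ‖w‖)
    (hw1 : ‖w‖ ^ 2 ≤ ⟪w, v₁⟫) (hw2 : ‖w‖ ^ 2 ≤ ⟪w, v₂⟫) :
    ∃ x : EuclideanSpace ℝ (Fin 3), ‖x‖ = 1 ∧ 1 ≤ ⟪x, v₁⟫ ∧ 1 ≤ ⟪x, v₂⟫ := by
  have hwpos : (0:ℝ) < ‖w‖ := lt_of_lt_of_le zero_lt_one hw
  refine ⟨‖w‖⁻¹ • w, ?_, ?_, ?_⟩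
  · rw [norm_smul, Real.norm_eq_abs, abs_of_pos (inv_pos.2 hwpos)]
    field_simp
  · rw [real_inner_smul_left]
    calc (1:ℝ) ≤ ‖w‖ := hw
      _ = ‖w‖⁻¹ * ‖w‖ ^ 2 := by field_simp
      _ ≤ ‖w‖⁻¹ * ⟪w, v₁⟫ := by
          exact mul_le_mul_of_nonneg_left hw1 (inv_pos.2 hwpos).le
  · rw [real_inner_smul_left]
    calc (1:ℝ) ≤ ‖w‖ := hw
      _ = ‖w‖⁻¹ * ‖w‖ ^ 2 := by field_simp
      _ ≤ ‖w‖⁻¹ * ⟪w, v₂⟫ := by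
          exact mul_le_mul_of_nonneg_left hw2 (inv_pos.2 hwpos).le

private lemma exists_cap_point (v₁ v₂ : EuclideanSpace ℝ (Fin 3))
    (h₁ : 1 < ‖v₁‖) (h₂ : 1 < ‖v₂‖)
    (hB : ∀ t ∈ Set.Icc (0:ℝ) 1, 1 ≤ ‖(1 - t) • v₁ + t • v₂‖) :
    ∃ x : EuclideanSpace ℝ (Fin 3), ‖x‖ = 1 ∧ 1 ≤ ⟪x, v₁⟫ ∧ 1 ≤ ⟪x, v₂⟫ := by
  rcases le_or_gt 0 ⟪v₁, v₂ - v₁⟫ with hA | hA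
  · -- minimizer at t = 0 : use w = v₁
    apply cap_point v₁ v₂ v₁ h₁.le
    · rw [← real_inner_self_eq_norm_sq]
    · rw [← real_inner_self_eq_norm_sq]
      have h := inner_sub_right (𝕜 := ℝ) v₁ v₂ v₁
      linarith [h ▸ hA]
  rcases le_or_gt 0 ⟪v₂, v₁ - v₂⟫ with hA' | hA'
  · -- minimizer at t = 1 : use w = v₂
    apply cap_point v₁ v₂ v₂ h₂.le
    · rw [← real_inner_self_eq_norm_sq]
      have h := inner_sub_right (𝕜 := ℝ) v₂ v₁ v₂
      linarith [h ▸ hA']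
    · rw [← real_inner_self_eq_norm_sq]
  · -- interior minimizer
    set d := v₂ - v₁ with hd
    have hv1d : ⟪v₁, d⟫ < 0 := hA
    have hv2d : 0 < ⟪v₂, d⟫ := by
      have h := inner_sub_right (𝕜 := ℝ) v₂ v₁ v₂
      have h2 : ⟪v₂, d⟫ = - ⟪v₂, v₁ - v₂⟫ := by
        rw [hd, inner_sub_right, inner_sub_right]; ring
      linarith [h2, hA']
    have hdd : (0:ℝ) < ⟪d, d⟫ := by
      have h : ⟪d, d⟫ = ⟪v₂, d⟫ - ⟪v₁, d⟫ := by
        rw [hd, inner_sub_left]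
      linarith
    set t : ℝ := -⟪v₁, d⟫ / ⟪d, d⟫ with htdef
    have ht0 : 0 < t := div_pos (by linarith) hdd
    have ht1 : t ≤ 1 := by
      rw [htdef, div_le_one hdd]
      have h : ⟪d, d⟫ = ⟪v₂, d⟫ - ⟪v₁, d⟫ := by rw [hd, inner_sub_left]
      linarith
    set w : EuclideanSpace ℝ (Fin 3) := (1 - t) • v₁ + t • v₂ with hwdef
    have hw : 1 ≤ ‖w‖ := hB t ⟨ht0.le, ht1⟩
    have hweq : w = v₁ + t • d := by rw [hwdef, hd]; module
    have hwd : ⟪w, d⟫ = 0 := by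
      rw [hweq, inner_add_left, real_inner_smul_left, htdef]
      have hc : -⟪v₁, d⟫ / ⟪d, d⟫ * ⟪d, d⟫ = -⟪v₁, d⟫ := div_mul_cancel₀ _ hdd.ne'
      linarith [hc]
    have hww : ⟪w, w⟫ = ‖w‖ ^ 2 := real_inner_self_eq_norm_sq w
    apply cap_point v₁ v₂ w hw
    · have hv1 : v₁ = w - t • d := by rw [hweq]; module
      have : ⟪w, v₁⟫ = ⟪w, w⟫ - t * ⟪w, d⟫ := by
        rw [hv1, inner_sub_right, real_inner_smul_right]
      rw [this, hwd, hww]; ring_nf; exact le_refl _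
    · have hv2 : v₂ = w + (1 - t) • d := by rw [hweq, hd]; module
      have : ⟪w, v₂⟫ = ⟪w, w⟫ + (1 - t) * ⟪w, d⟫ := by
        rw [hv2, inner_add_right, real_inner_smul_right]
      rw [this, hwd, hww]; ring_nf; exact le_refl _

/-- For `v₁, v₂` with `‖v₁‖, ‖v₂‖ > 1`, the closed caps
`cap(vᵢ) = {x ∈ S² : ⟪x,vᵢ⟫ ≥ 1}` cut out by the polar dual planes are disjoint
if and only if the line through `v₁` and `v₂` passes at distance `< 1` from the
origin and the segment `[v₁, v₂]` meets the open unit ball (the defining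
condition for edges of hyperideal polyhedra in the Klein model). -/
theorem caps_disjoint_iff_segment_meets_ball
    (v₁ v₂ : EuclideanSpace ℝ (Fin 3)) (h₁ : 1 < ‖v₁‖) (h₂ : 1 < ‖v₂‖) :
    ({x : EuclideanSpace ℝ (Fin 3) | ‖x‖ = 1 ∧ 1 ≤ ⟪x, v₁⟫} ∩
        {x : EuclideanSpace ℝ (Fin 3) | ‖x‖ = 1 ∧ 1 ≤ ⟪x, v₂⟫} = ∅) ↔
      ((∃ t : ℝ, ‖(1 - t) • v₁ + t • v₂‖ < 1) ∧
       (∃ t ∈ Set.Icc (0 : ℝ) 1, ‖(1 - t) • v₁ + t • v₂‖ < 1)) := by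
  constructor
  · intro hdis
    by_contra hc
    have hB : ∀ t ∈ Set.Icc (0:ℝ) 1, 1 ≤ ‖(1 - t) • v₁ + t • v₂‖ := by
      intro t ht
      by_contra hlt
      push_neg at hlt
      exact hc ⟨⟨t, hlt⟩, ⟨t, ht, hlt⟩⟩
    obtain ⟨x, hx, hx1, hx2⟩ := exists_cap_point v₁ v₂ h₁ h₂ hB
    have hmem : x ∈ ({x : EuclideanSpace ℝ (Fin 3) | ‖x‖ = 1 ∧ 1 ≤ ⟪x, v₁⟫} ∩
        {x : EuclideanSpace ℝ (Fin 3) | ‖x‖ = 1 ∧ 1 ≤ ⟪x, v₂⟫}) := ⟨⟨hx, hx1⟩, ⟨hx, hx2⟩⟩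
    rw [hdis] at hmem
    exact hmem
  · rintro ⟨-, t, ht, hlt⟩
    rw [Set.eq_empty_iff_forall_notMem]
    rintro x ⟨⟨hx, hx1⟩, ⟨-, hx2⟩⟩
    have h3 : (1:ℝ) ≤ ⟪x, (1 - t) • v₁ + t • v₂⟫ := by
      rw [inner_add_right, real_inner_smul_right, real_inner_smul_right]
      nlinarith [ht.1, ht.2, hx1, hx2]
    have h4 := real_inner_le_norm x ((1 - t) • v₁ + t • v₂)
    rw [hx, one_mul] at h4
    linarith
end
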